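/- Define N(α,t) = (α + (1-α)/(1+t))² + 3(1-α)²·(1 - 1/(1+t))² and H(α,t) = log(1+t) - ((2t+t²)/2)·log(N(α,t)) - t - (3/2 - 2α)·t². Then for all α ∈ [0, 1/2] and all t ≥ 0, the partial derivative of H with respect to α equals ((8α² - 16α + 9)t⁴ + (5-4α)t³)/((1+t)²·N(α,t)), and this is nonnegative; in particular H(α,t) ≤ H(1/2,t) for α ∈ [0,1/2]. -/

import Mathlib

/-- N(α,t) from equation (9.4) of the paper. -/
noncomputable def Nfun (α t : ℝ) : ℝ :=
  (α + (1 - α) / (1 + t)) ^ 2 + 3 * (1 - α) ^ 2 * (1 - 1 / (1 + t)) ^ 2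

/-- H(α,t) from equation (9.4) of the paper. -/
noncomputable def Hfun (α t : ℝ) : ℝ :=
  Real.log (1 + t) - ((2 * t + t ^ 2) / 2) * Real.log (Nfun α t) - t - (3 / 2 - 2 * α) * t ^ 2

/-
Clearing denominators, `(1 + t)² N(α,t) = (1 + α t)² + 3 (1 - α)² t²`, a quadratic in `α`
that is at least `1` for `α, t ≥ 0`. Differentiating `H` through this form gives the stated
derivative, whose numerator has coefficients `8 (α - 1)² + 1` and `5 - 4α`, both nonnegative for
`α ≤ 5/4`; hence `H(·, t)` is monotone on `[0, 5/4]`.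
-/

lemma Nfun_eq_div {t : ℝ} (ht : 1 + t ≠ 0) (α : ℝ) :
    Nfun α t = ((1 + α * t) ^ 2 + 3 * (1 - α) ^ 2 * t ^ 2) / (1 + t) ^ 2 := by
  unfold Nfun
  field_simp
  ring

lemma Nfun_pos {α t : ℝ} (hα : 0 ≤ α) (ht : 0 ≤ t) : 0 < Nfun α t := by
  rw [Nfun_eq_div (by positivity)]
  have : 1 ≤ 1 + α * t := by nlinarith
  positivity

lemma hasDerivAt_Nfun {t : ℝ} (ht : 1 + t ≠ 0) (α : ℝ) :
    HasDerivAt (fun a => Nfun a t) (2 * t * (1 + (4 * α - 3) * t) / (1 + t) ^ 2) α := by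
  have hnum : HasDerivAt (fun a : ℝ => (1 + a * t) ^ 2 + 3 * (1 - a) ^ 2 * t ^ 2)
      (2 * t * (1 + (4 * α - 3) * t)) α := by
    have h₁ := (((hasDerivAt_id α).mul_const t).const_add 1).pow 2
    have h₂ := ((((hasDerivAt_id α).const_sub 1).pow 2).const_mul 3).mul_const (t ^ 2)
    exact (h₁.add h₂).congr_deriv (by simp only [id, Nat.cast_ofNat]; ring)
  rw [funext (Nfun_eq_div ht)]
  exact hnum.div_const _

noncomputable def dHfun (α t : ℝ) : ℝ :=
  ((8 * α ^ 2 - 16 * α + 9) * t ^ 4 + (5 - 4 * α) * t ^ 3) / ((1 + t) ^ 2 * Nfun α t)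

lemma hasDerivAt_Hfun {α t : ℝ} (ht : 1 + t ≠ 0) (hN : Nfun α t ≠ 0) :
    HasDerivAt (fun a => Hfun a t) (dHfun α t) α := by
  have hlog := ((hasDerivAt_Nfun ht α).log hN).const_mul ((2 * t + t ^ 2) / 2)
  have hquad : HasDerivAt (fun a : ℝ => (3 / 2 - 2 * a) * t ^ 2) (-2 * t ^ 2) α :=
    ((((hasDerivAt_id α).const_mul 2).const_sub (3 / 2)).mul_const (t ^ 2)).congr_deriv (by ring)
  refine (((hlog.const_sub (Real.log (1 + t))).sub_const t).sub hquad).congr_deriv ?_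
  rw [dHfun, Nfun_eq_div ht] at *
  have hP := left_ne_zero_of_mul hN
  have hsq : (1 + t) ^ 2 ≠ 0 := pow_ne_zero 2 ht
  rw [mul_div_cancel₀ _ hsq, div_div_div_cancel_right₀ hsq, eq_div_iff hP, sub_mul, sub_mul,
    neg_mul, mul_assoc, div_mul_cancel₀ _ hP]
  ring

lemma dHfun_nonneg {α t : ℝ} (hα₀ : 0 ≤ α) (hα₁ : α ≤ 5 / 4) (ht : 0 ≤ t) : 0 ≤ dHfun α t := by
  have : 0 ≤ 8 * α ^ 2 - 16 * α + 9 := by nlinarith [sq_nonneg (α - 1)]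
  have : 0 ≤ 5 - 4 * α := by linarith
  have := Nfun_pos hα₀ ht
  unfold dHfun
  positivity

lemma monotoneOn_Hfun {t : ℝ} (ht : 0 ≤ t) :
    MonotoneOn (fun a => Hfun a t) (Set.Icc 0 (5 / 4)) := by
  have hderiv : ∀ a ∈ Set.Icc (0 : ℝ) (5 / 4), HasDerivAt (fun a => Hfun a t) (dHfun a t) a :=
    fun a ha => hasDerivAt_Hfun (by positivity) (Nfun_pos ha.1 ht).ne'
  refine monotoneOn_of_deriv_nonneg (convex_Icc _ _)
    (fun a ha => (hderiv a ha).continuousAt.continuousWithinAt)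
    (fun a ha => (hderiv a (interior_subset ha)).differentiableAt.differentiableWithinAt)
    fun a ha => ?_
  rw [interior_Icc] at ha
  rw [(hderiv a (Set.Ioo_subset_Icc_self ha)).deriv]
  exact dHfun_nonneg ha.1.le ha.2.le ht

/-- ∂_α H(α,t) = ((8α²-16α+9)t⁴+(5-4α)t³)/((1+t)²·N(α,t)) ≥ 0 on
[0,1/2] × [0,∞); in particular H(α,t) ≤ H(1/2,t). -/
theorem stmt_3 (α t : ℝ) (hα : α ∈ Set.Icc (0 : ℝ) (1 / 2)) (ht : 0 ≤ t) :
    deriv (fun a => Hfun a t) α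
        = ((8 * α ^ 2 - 16 * α + 9) * t ^ 4 + (5 - 4 * α) * t ^ 3)
          / ((1 + t) ^ 2 * Nfun α t)
    ∧ 0 ≤ ((8 * α ^ 2 - 16 * α + 9) * t ^ 4 + (5 - 4 * α) * t ^ 3)
          / ((1 + t) ^ 2 * Nfun α t)
    ∧ Hfun α t ≤ Hfun (1 / 2) t := by
  obtain ⟨hα₀, hα₁⟩ := hα
  have hα₁' : α ≤ 5 / 4 := by linarith
  refine ⟨(hasDerivAt_Hfun (by positivity) (Nfun_pos hα₀ ht).ne').deriv,
    dHfun_nonneg hα₀ hα₁' ht, ?_⟩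
  exact monotoneOn_Hfun ht ⟨hα₀, hα₁'⟩ ⟨by norm_num, by norm_num⟩ hα₁
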